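/- arXiv:1808.08551 — 2 statements merged into one kernel-verified Lean document; each statement's English description precedes it below -/
import Mathlib

section
/- Let v ∈ ℝ^k be a row vector with entries in [−1,1] and A a k×k symmetric positive-definite matrix with all diagonal entries equal to 1. Then the quantity (ρ^c)² = v A^{-1} vᵀ satisfies (ρ^c)² ≥ max_{1≤t≤k} v_t², i.e., the squared canonical correlation is at least the largest squared marginal correlation. -/
open Matrix

theorem cc_lower_bound (k : ℕ)
    (A : Matrix (Fin k) (Fin k) ℝ) (v : Fin k → ℝ)
    (hA : A.PosDef) (hAsymm : A.IsSymm)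
    (hdiag : ∀ t, A t t = 1)
    (hv : ∀ t, |v t| ≤ 1) :
    ∀ t : Fin k, (v t) ^ 2 ≤ v ⬝ᵥ A⁻¹ *ᵥ v := by
  intro t
  have hBpd : (A⁻¹).PosDef := hA.inv
  have hinv : Invertible A := hA.isUnit.invertible
  have hAinvA : A⁻¹ * A = 1 := inv_mul_of_invertible A
  have hAAinv : A * A⁻¹ = 1 := mul_inv_of_invertible A
  set e : Fin k → ℝ := Pi.single t 1 with he
  set y : Fin k → ℝ := A *ᵥ e with hy
  -- key dot products
  have hBy : A⁻¹ *ᵥ y = e := by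
    rw [hy, mulVec_mulVec, hAinvA, one_mulVec]
  have hxy : v ⬝ᵥ A⁻¹ *ᵥ y = v t := by
    rw [hBy, he, dotProduct_single, mul_one]
  have hinvsymm : A⁻¹ᵀ = A⁻¹ := hBpd.isHermitian.eq
  have hyx : y ⬝ᵥ A⁻¹ *ᵥ v = v t := by
    rw [dotProduct_mulVec, show y ᵥ* A⁻¹ = e by
      rw [← mulVec_transpose, hinvsymm, hBy], he, single_dotProduct, one_mul]
  have hyy : y ⬝ᵥ A⁻¹ *ᵥ y = 1 := by
    rw [hBy, hy, he, dotProduct_single, mul_one, mulVec_single]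
    simp [hdiag t]
  -- positive semidefiniteness of the quadratic form at v - (v t) • y
  set z : Fin k → ℝ := v - (v t) • y with hz
  have hnn : 0 ≤ z ⬝ᵥ A⁻¹ *ᵥ z := hBpd.posSemidef.re_dotProduct_nonneg z
  have hexp : z ⬝ᵥ A⁻¹ *ᵥ z = v ⬝ᵥ A⁻¹ *ᵥ v - (v t) ^ 2 := by
    rw [hz]
    simp only [mulVec_sub, mulVec_smul, sub_dotProduct, dotProduct_sub,
      smul_dotProduct, dotProduct_smul, smul_eq_mul, hxy, hyx, hyy]
    ring
  linarith [hexp ▸ hnn]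
end

section
/- Theorem 1 (sure screening property): Under (A1) log p = O(n^ξ) for some ξ ∈ (0,1−2κ); (A2) λ_max((Σ_{J^l×J^l})^{-1}) ≤ c₀ for all k-subsets J^l; (A3) min_{i∈M*} max_{l∈I_i^n} ρ_l^c ≥ c₁ n^{−κ} for some 0 ≤ κ < 1/2; and assuming each estimated correlation entry satisfies the concentration P(|Ŝ_{s,t} − Σ_{s,t}| ≥ c n^{−κ}) ≤ 2 exp(−(2c²/π²) n^{1−2κ}); then there exist constants c₁* > 0, C > 0 such that P(min_{i∈M*} max_{l∈I_i^n} ρ̂_l^c ≥ c₁* n^{−κ}) ≥ 1 − O(exp(−C n^{1−2κ})), and consequently P(M* ⊆ M̂_{c₁* n^{−κ}}) ≥ 1 − O(exp(−C n^{1−2κ})), where M̂_t = {i : max_{l∈I_i^n} ρ̂_l^c > t}. -/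
open MeasureTheory
open scoped ENNReal

/-- Theorem 1 of the paper: sure screening property of the canonical-correlation
based screening procedure for the elliptical copula regression model. -/
theorem sure_screening_property
    (κ ξ c₀ c₁ : ℝ) (hκ0 : 0 ≤ κ) (hκ : κ < 1 / 2)
    (hξ0 : 0 < ξ) (hξ : ξ < 1 - 2 * κ)
    (hc₀ : 0 < c₀) (hc₁ : 0 < c₁) (k : ℕ) (hk : 0 < k)
    (Ω : ℕ → Type*) (mΩ : ∀ n, MeasurableSpace (Ω n))
    (μ : ∀ n, Measure (Ω n)) (hμ : ∀ n, IsProbabilityMeasure (μ n))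
    (p : ℕ → ℕ) (L : ℕ → Type*)
    -- the indices of the k covariates used in the l-th k-variable set
    (m : ∀ n, L n → Fin k → Fin (p n))
    -- the true active set M*
    (Mstar : ∀ n, Finset (Fin (p n)))
    -- the family I_i^n of k-variable sets associated with variable i
    (I : ∀ n, Fin (p n) → Set (L n))
    -- the population correlations Σ_{1,j} and their Kendall's tau based estimates
    (Sig : ∀ n, Fin (p n) → ℝ) (Shat : ∀ n, Fin (p n) → Ω n → ℝ)
    -- population and estimated canonical correlations
    (ρ : ∀ n, L n → ℝ) (ρhat : ∀ n, (L n) → Ω n → ℝ)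
    -- Assumption 1: log p = O(n^ξ)
    (hA1 : ∃ M : ℝ, ∀ n : ℕ, 1 ≤ n → Real.log (p n) ≤ M * (n : ℝ) ^ ξ)
    -- consequence of Assumption 2: (ρ_l^c)² ≤ c₀ ∑_t Σ_{1,m_t^l}²
    (hA2 : ∀ n, ∀ l : L n, (ρ n l) ^ 2 ≤ c₀ * ∑ t, (Sig n (m n l t)) ^ 2)
    -- Assumption 3: min over i ∈ M* of max over l ∈ I_i^n of ρ_l^c ≥ c₁ n^{-κ}
    (hA3 : ∀ n : ℕ, 1 ≤ n → ∀ i ∈ Mstar n, ∃ l ∈ I n i, c₁ * (n : ℝ) ^ (-κ) ≤ ρ n l)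
    (hρhat_nonneg : ∀ n, ∀ (l : L n) (ω : Ω n), 0 ≤ ρhat n l ω)
    -- (ρ̂_l^c)² ≥ max_t Ŝ_{1,m_t^l}²
    (hlow : ∀ n, ∀ (l : L n) (ω : Ω n) (t : Fin k), |Shat n (m n l t) ω| ≤ ρhat n l ω)
    -- concentration of each estimated correlation entry
    (hconc : ∀ n : ℕ, 1 ≤ n → ∀ (j : Fin (p n)) (c : ℝ), 0 < c →
      μ n {ω | c * (n : ℝ) ^ (-κ) ≤ |Shat n j ω - Sig n j|} ≤
        ENNReal.ofReal (2 * Real.exp (-(2 * c ^ 2 / Real.pi ^ 2) * (n : ℝ) ^ (1 - 2 * κ)))) :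
    ∃ c₁star C A : ℝ, 0 < c₁star ∧ 0 < C ∧ 0 < A ∧ ∃ n₀ : ℕ, ∀ n ≥ n₀,
      (ENNReal.ofReal (1 - A * Real.exp (-C * (n : ℝ) ^ (1 - 2 * κ))) ≤
        μ n {ω | ∀ i ∈ Mstar n, ∃ l ∈ I n i, c₁star * (n : ℝ) ^ (-κ) ≤ ρhat n l ω}) ∧
      (ENNReal.ofReal (1 - A * Real.exp (-C * (n : ℝ) ^ (1 - 2 * κ))) ≤
        μ n {ω | ∀ i ∈ Mstar n, ∃ l ∈ I n i, c₁star * (n : ℝ) ^ (-κ) < ρhat n l ω})  := by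
  classical
  obtain ⟨M, hM⟩ := hA1
  set M' : ℝ := max M 1 with hM'def
  have hM'pos : (0:ℝ) < M' := lt_of_lt_of_le one_pos (le_max_right _ _)
  have hsqrt : 0 < Real.sqrt (c₀ * k) := Real.sqrt_pos.2 (by positivity)
  set c₂ : ℝ := c₁ / Real.sqrt (c₀ * k) with hc₂def
  have hc₂ : 0 < c₂ := div_pos hc₁ hsqrt
  have hπ : (0:ℝ) < Real.pi := Real.pi_pos
  set C₀ : ℝ := 2 * (c₂ / 2) ^ 2 / Real.pi ^ 2 with hC₀def
  have hC₀ : 0 < C₀ := by positivity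
  have hepos : 0 < 1 - 2 * κ - ξ := by linarith
  have htend : Filter.Tendsto (fun n : ℕ => (n : ℝ) ^ (1 - 2 * κ - ξ))
      Filter.atTop Filter.atTop :=
    (tendsto_rpow_atTop hepos).comp tendsto_natCast_atTop_atTop
  obtain ⟨n₀, hn₀⟩ := Filter.eventually_atTop.1 (htend.eventually_ge_atTop (2 * M' / C₀))
  refine ⟨c₂ / 2, C₀ / 2, 2, by positivity, by positivity, by norm_num, max n₀ 1, ?_⟩
  intro n hn
  have hn1 : 1 ≤ n := le_trans (le_max_right n₀ 1) hn
  have hnn₀ : n₀ ≤ n := le_trans (le_max_left n₀ 1) hn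
  have hnpos : (0:ℝ) < (n:ℝ) := by exact_mod_cast hn1
  have hpowpos : (0:ℝ) < (n:ℝ) ^ (-κ) := Real.rpow_pos_of_pos hnpos _
  set P : ℝ := (n:ℝ) ^ (1 - 2 * κ) with hPdef
  set bad : Fin (p n) → Set (Ω n) :=
    fun j => {ω | (c₂ / 2) * (n:ℝ) ^ (-κ) ≤ |Shat n j ω - Sig n j|} with hbad
  haveI : Nonempty (Fin k) := Fin.pos_iff_nonempty.1 hk
  -- the good event implies the screening event (strict version)
  have hGsub : (⋃ j, bad j)ᶜ ⊆
      {ω | ∀ i ∈ Mstar n, ∃ l ∈ I n i, (c₂ / 2) * (n:ℝ) ^ (-κ) < ρhat n l ω} := by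
    intro ω hω i hi
    simp only [Set.mem_compl_iff, Set.mem_iUnion, not_exists, hbad, Set.mem_setOf_eq,
      not_le] at hω
    obtain ⟨l, hl, hρ⟩ := hA3 n hn1 i hi
    have hc₂sq : c₂ ^ 2 = c₁ ^ 2 / (c₀ * k) := by
      rw [hc₂def, div_pow, Real.sq_sqrt (by positivity)]
    have hk' : (0:ℝ) < (k:ℝ) := by exact_mod_cast hk
    have hsum : (c₁ * (n:ℝ) ^ (-κ)) ^ 2 ≤ c₀ * ∑ t, (Sig n (m n l t)) ^ 2 := by
      refine le_trans ?_ (hA2 n l)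
      exact pow_le_pow_left₀ (by positivity) hρ 2
    have hex : ∃ t : Fin k, (c₂ * (n:ℝ) ^ (-κ)) ^ 2 ≤ (Sig n (m n l t)) ^ 2 := by
      by_contra hcon
      push_neg at hcon
      have hlt : ∑ t : Fin k, (Sig n (m n l t)) ^ 2 <
          ∑ _t : Fin k, (c₂ * (n:ℝ) ^ (-κ)) ^ 2 := by
        apply Finset.sum_lt_sum_of_nonempty Finset.univ_nonempty
        intro t _
        exact hcon t
      rw [Finset.sum_const, Finset.card_univ, Fintype.card_fin, nsmul_eq_mul] at hlt
      have hkey : (k:ℝ) * (c₂ * (n:ℝ) ^ (-κ)) ^ 2 = (c₁ * (n:ℝ) ^ (-κ)) ^ 2 / c₀ := by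
        rw [mul_pow, mul_pow, hc₂sq]
        field_simp
      rw [hkey, div_eq_mul_inv] at hlt
      have : c₀ * ∑ t : Fin k, (Sig n (m n l t)) ^ 2 < (c₁ * (n:ℝ) ^ (-κ)) ^ 2 := by
        have h := (mul_lt_mul_iff_right₀ hc₀).2 hlt
        calc c₀ * ∑ t : Fin k, (Sig n (m n l t)) ^ 2
            < c₀ * ((c₁ * (n:ℝ) ^ (-κ)) ^ 2 * c₀⁻¹) := h
          _ = (c₁ * (n:ℝ) ^ (-κ)) ^ 2 := by field_simp
      linarith
    obtain ⟨t, ht⟩ := hex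
    have habs : c₂ * (n:ℝ) ^ (-κ) ≤ |Sig n (m n l t)| := by
      have h := Real.sqrt_le_sqrt ht
      rwa [Real.sqrt_sq (by positivity), Real.sqrt_sq_eq_abs] at h
    have hdiff := hω (m n l t)
    have h1 : |Sig n (m n l t)| - |Shat n (m n l t) ω| ≤
        |Shat n (m n l t) ω - Sig n (m n l t)| := by
      have := abs_sub_abs_le_abs_sub (Sig n (m n l t)) (Shat n (m n l t) ω)
      rwa [abs_sub_comm] at this
    have h2 := hlow n l ω t
    exact ⟨l, hl, by linarith⟩
  -- union bound
  have hμbad : μ n (⋃ j, bad j) ≤ ENNReal.ofReal (2 * Real.exp (-(C₀ / 2) * P)) := by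
    calc μ n (⋃ j, bad j) ≤ ∑' j, μ n (bad j) := measure_iUnion_le _
      _ ≤ ∑' j : Fin (p n), ENNReal.ofReal (2 * Real.exp (-C₀ * P)) := by
          apply ENNReal.tsum_le_tsum
          intro j
          have h := hconc n hn1 j (c₂ / 2) (by positivity)
          rw [hbad]
          rw [hC₀def, hPdef]
          exact h
      _ = (p n : ℝ≥0∞) * ENNReal.ofReal (2 * Real.exp (-C₀ * P)) := by
          rw [tsum_fintype, Finset.sum_const, Finset.card_univ, Fintype.card_fin, nsmul_eq_mul]
      _ ≤ ENNReal.ofReal (2 * Real.exp (-(C₀ / 2) * P)) := by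
          rw [← ENNReal.ofReal_natCast (p n), ← ENNReal.ofReal_mul (by positivity)]
          apply ENNReal.ofReal_le_ofReal
          have hξn : (0:ℝ) < (n:ℝ) ^ ξ := Real.rpow_pos_of_pos hnpos _
          have hp : (p n : ℝ) ≤ Real.exp (M' * (n:ℝ) ^ ξ) := by
            rcases Nat.eq_zero_or_pos (p n) with h0 | hp1
            · rw [h0]
              simp [Real.exp_pos, (Real.exp_pos _).le]
            · have hlog : Real.log (p n) ≤ M' * (n:ℝ) ^ ξ :=
                le_trans (hM n hn1)
                  (mul_le_mul_of_nonneg_right (le_max_left M 1) hξn.le)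
              calc (p n : ℝ) = Real.exp (Real.log (p n)) := by
                    rw [Real.exp_log (by exact_mod_cast hp1)]
                _ ≤ _ := Real.exp_le_exp.2 hlog
          have hMn : M' * (n:ℝ) ^ ξ ≤ (C₀ / 2) * P := by
            have h1 : 2 * M' / C₀ ≤ (n:ℝ) ^ (1 - 2 * κ - ξ) := hn₀ n hnn₀
            have h2 : (n:ℝ) ^ ξ * (n:ℝ) ^ (1 - 2 * κ - ξ) = P := by
              rw [hPdef, ← Real.rpow_add hnpos]
              ring_nf
            have h3 : M' ≤ (C₀ / 2) * (n:ℝ) ^ (1 - 2 * κ - ξ) := by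
              rw [div_le_iff₀ hC₀] at h1
              linarith
            calc M' * (n:ℝ) ^ ξ
                ≤ ((C₀ / 2) * (n:ℝ) ^ (1 - 2 * κ - ξ)) * (n:ℝ) ^ ξ :=
                  mul_le_mul_of_nonneg_right h3 hξn.le
              _ = (C₀ / 2) * P := by rw [← h2]; ring
          calc (p n : ℝ) * (2 * Real.exp (-C₀ * P))
              ≤ Real.exp (M' * (n:ℝ) ^ ξ) * (2 * Real.exp (-C₀ * P)) := by
                apply mul_le_mul_of_nonneg_right hp (by positivity)
            _ = 2 * Real.exp (M' * (n:ℝ) ^ ξ + -C₀ * P) := by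
                rw [Real.exp_add]; ring
            _ ≤ 2 * Real.exp (-(C₀ / 2) * P) := by
                apply mul_le_mul_of_nonneg_left (Real.exp_le_exp.2 (by linarith)) (by norm_num)
  -- from complement bound to lower bound on the good event
  have hone : (1:ℝ≥0∞) ≤ μ n ((⋃ j, bad j)ᶜ) + μ n (⋃ j, bad j) := by
    have huniv : μ n Set.univ = 1 := (hμ n).measure_univ
    calc (1:ℝ≥0∞) = μ n Set.univ := huniv.symm
      _ = μ n ((⋃ j, bad j)ᶜ ∪ ⋃ j, bad j) := by rw [Set.compl_union_self]
      _ ≤ _ := measure_union_le _ _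
  have hGlb : ENNReal.ofReal (1 - 2 * Real.exp (-(C₀ / 2) * P)) ≤ μ n ((⋃ j, bad j)ᶜ) := by
    rw [ENNReal.ofReal_sub _ (by positivity), ENNReal.ofReal_one]
    refine le_trans (tsub_le_tsub_left hμbad 1) ?_
    exact tsub_le_iff_right.2 hone
  have hsub2 : {ω | ∀ i ∈ Mstar n, ∃ l ∈ I n i, (c₂ / 2) * (n:ℝ) ^ (-κ) < ρhat n l ω} ⊆
      {ω | ∀ i ∈ Mstar n, ∃ l ∈ I n i, (c₂ / 2) * (n:ℝ) ^ (-κ) ≤ ρhat n l ω} := by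
    intro ω hω i hi
    obtain ⟨l, hl, h⟩ := hω i hi
    exact ⟨l, hl, h.le⟩
  constructor
  · exact le_trans hGlb (measure_mono (le_trans hGsub hsub2))
  · exact le_trans hGlb (measure_mono hGsub)
end
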